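/- arXiv:1802.05015 — 4 statements merged into one kernel-verified Lean document; each statement's English description precedes it below -/
import Mathlib

section
/- Let λ, μ > 0 with λ ≠ μ, ω = λ − μ, t > 0, and let p_k be the modified geometric pmf with parameters α(t) = μ(e^{ωt}−1)/(λe^{ωt}−μ) and β(t) = (λ/μ)α(t), assuming 0 ≤ α(t), β(t) < 1. Then the variance of this distribution equals ((λ+μ)/ω)·e^{ωt}·(e^{ωt} − 1). -/
/-!
The modified geometric law with parameters `α, β` (`|β| < 1`) has mean `(1 - α) / (1 - β)` and
variance `(1 - α) (α + β) / (1 - β)²`, by shifting the series by one and summing `n² βⁿ`, `n βⁿ`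
and `βⁿ`. For the birth-and-death parameters, with `E = e^{ωt}` and `D = λE - μ ≠ 0`, one has
`1 - α = Eω / D`, `1 - β = ω / D` and `α + β = (λ + μ)(E - 1) / D`, so the mean is `E` and the
variance is `((λ + μ) / ω) E (E - 1)`.
-/

open Real

theorem hasSum_sq_mul_geometric_of_norm_lt_one {𝕜 : Type*} [RCLike 𝕜] {r : 𝕜} (hr : ‖r‖ < 1) :
    HasSum (fun n : ℕ => (n : 𝕜) ^ 2 * r ^ n) (r * (1 + r) / (1 - r) ^ 3) := by
  have hr1 : 1 - r ≠ 0 := sub_ne_zero.2 fun h => by simp [← h] at hr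
  have hterm (n : ℕ) : (n : 𝕜) ^ 2 * r ^ n =
      2 * ((n + 2).choose 2 * r ^ n) - 3 * (n * r ^ n) - 2 * r ^ n := by
    rw [Nat.cast_choose_two]
    push_cast
    ring
  have hvalue : r * (1 + r) / (1 - r) ^ 3 =
      2 * (1 / (1 - r) ^ (2 + 1)) - 3 * (r / (1 - r) ^ 2) - 2 * (1 - r)⁻¹ := by
    field_simp
    ring
  rw [funext hterm, hvalue]
  exact (((hasSum_choose_mul_geometric_of_norm_lt_one 2 hr).mul_left 2).sub
    ((hasSum_coe_mul_geometric_of_norm_lt_one hr).mul_left 3)).sub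
    ((hasSum_geometric_of_norm_lt_one hr).mul_left 2)

def modifiedGeometric (α β : ℝ) (k : ℕ) : ℝ :=
  if k = 0 then α else (1 - α) * (1 - β) * β ^ (k - 1)

/-- `(1 - α) / (1 - β)` is the mean of `modifiedGeometric α β`. -/
theorem hasSum_sq_sub_mean_mul_modifiedGeometric {α β : ℝ} (hβ : |β| < 1) :
    HasSum (fun k : ℕ => ((k : ℝ) - (1 - α) / (1 - β)) ^ 2 * modifiedGeometric α β k)
      ((1 - α) * (α + β) / (1 - β) ^ 2) := by
  have hβ1 : 1 - β ≠ 0 := by linarith [(abs_lt.1 hβ).2]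
  set m := (1 - α) / (1 - β) with hm
  have hterm (n : ℕ) : (((n + 1 : ℕ) : ℝ) - m) ^ 2 * modifiedGeometric α β (n + 1) =
      (1 - α) * (1 - β) * ((n : ℝ) ^ 2 * β ^ n + 2 * (1 - m) * (n * β ^ n) + (1 - m) ^ 2 * β ^ n) := by
    simp only [modifiedGeometric, Nat.add_one_ne_zero, if_false, Nat.add_sub_cancel]
    push_cast
    ring
  have hvalue : (1 - α) * (α + β) / (1 - β) ^ 2 =
      (1 - α) * (1 - β) * (β * (1 + β) / (1 - β) ^ 3 + 2 * (1 - m) * (β / (1 - β) ^ 2) +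
        (1 - m) ^ 2 * (1 - β)⁻¹) + ∑ i ∈ Finset.range 1, ((i : ℝ) - m) ^ 2 * modifiedGeometric α β i := by
    simp only [Finset.sum_range_one, modifiedGeometric, if_true, Nat.cast_zero, hm]
    field_simp
    ring
  have hβ' : ‖β‖ < 1 := hβ
  rw [hvalue, ← hasSum_nat_add_iff 1]
  simp only [hterm]
  exact (((hasSum_sq_mul_geometric_of_norm_lt_one hβ').add
    ((hasSum_coe_mul_geometric_of_norm_lt_one hβ').mul_left (2 * (1 - m)))).add
    ((hasSum_geometric_of_norm_lt_one hβ').mul_left ((1 - m) ^ 2))).mul_left ((1 - α) * (1 - β))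

theorem mul_exp_mul_sub_one_nonneg (x : ℝ) {t : ℝ} (ht : 0 ≤ t) : 0 ≤ x * (exp (x * t) - 1) := by
  rcases le_total 0 x with hx | hx
  · exact mul_nonneg hx (sub_nonneg.2 (one_le_exp (mul_nonneg hx ht)))
  · exact mul_nonneg_of_nonpos_of_nonpos hx
      (sub_nonpos.2 (exp_le_one_iff.2 (mul_nonpos_of_nonpos_of_nonneg hx ht)))

theorem mul_exp_sub_ne_zero {lam mu t : ℝ} (hlam : 0 ≤ lam) (hne : lam ≠ mu) (ht : 0 ≤ t) :
    lam * exp ((lam - mu) * t) - mu ≠ 0 := by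
  -- `(λ - μ) (λ e^{(λ-μ)t} - μ) = λ (λ - μ) (e^{(λ-μ)t} - 1) + (λ - μ)^2 > 0`
  have hpos : 0 < (lam - mu) * (lam * exp ((lam - mu) * t) - mu) := by
    nlinarith [mul_nonneg hlam (mul_exp_mul_sub_one_nonneg (lam - mu) ht),
      sq_pos_of_ne_zero (sub_ne_zero.2 hne)]
  exact right_ne_zero_of_mul hpos.ne'

theorem stmt4_general (lam mu t : ℝ) (hlam : 0 < lam) (hmu : 0 < mu) (hne : lam ≠ mu)
    (ht : 0 < t)
    (α β : ℝ)
    (hα : α = mu * (Real.exp ((lam - mu) * t) - 1) /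
      (lam * Real.exp ((lam - mu) * t) - mu))
    (hβ : β = (lam / mu) * α)
    (hβ0 : 0 ≤ β) (hβ1 : β < 1)
    (p : ℕ → ℝ)
    (hp : ∀ k, p k = if k = 0 then α else (1 - α) * (1 - β) * β ^ (k - 1)) :
    ∑' k : ℕ, ((k : ℝ) - Real.exp ((lam - mu) * t)) ^ 2 * p k =
      ((lam + mu) / (lam - mu)) * Real.exp ((lam - mu) * t) *
        (Real.exp ((lam - mu) * t) - 1) := by
  set E := exp ((lam - mu) * t)
  have hD : lam * E - mu ≠ 0 := mul_exp_sub_ne_zero hlam.le hne ht.le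
  have hD' : E * lam - mu ≠ 0 := by rwa [mul_comm]
  have h1β : 1 - β = (lam - mu) / (lam * E - mu) := by
    rw [hβ, hα]; field_simp; ring
  have h1α : 1 - α = E * (lam - mu) / (lam * E - mu) := by
    rw [hα]; field_simp; ring
  have hαβ : α + β = (lam + mu) * (E - 1) / (lam * E - mu) := by
    rw [hβ, hα]; field_simp; ring
  have hmean : (1 - α) / (1 - β) = E := by
    rw [h1α, h1β]; field_simp
  have hvar : (1 - α) * (α + β) / (1 - β) ^ 2 = (lam + mu) / (lam - mu) * E * (E - 1) := by
    rw [h1α, h1β, hαβ]; field_simp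
  have hsum := hasSum_sq_sub_mean_mul_modifiedGeometric (α := α) (abs_lt.2 ⟨by linarith, hβ1⟩)
  rw [hmean, hvar] at hsum
  rw [funext hp]
  exact hsum.tsum_eq

/-- The variance of the modified geometric distribution of the
population size of a linear birth-and-death process started from one individual
is `((λ+μ)/ω) e^{ωt} (e^{ωt}-1)`. -/
theorem stmt4 (lam mu t : ℝ) (hlam : 0 < lam) (hmu : 0 < mu) (hne : lam ≠ mu)
    (ht : 0 < t)
    (α β : ℝ)
    (hα : α = mu * (Real.exp ((lam - mu) * t) - 1) /
      (lam * Real.exp ((lam - mu) * t) - mu))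
    (hβ : β = (lam / mu) * α)
    (hα0 : 0 ≤ α) (hα1 : α < 1) (hβ0 : 0 ≤ β) (hβ1 : β < 1)
    (p : ℕ → ℝ)
    (hp : ∀ k, p k = if k = 0 then α else (1 - α) * (1 - β) * β ^ (k - 1)) :
    ∑' k : ℕ, ((k : ℝ) - Real.exp ((lam - mu) * t)) ^ 2 * p k =
      ((lam + mu) / (lam - mu)) * Real.exp ((lam - mu) * t) *
        (Real.exp ((lam - mu) * t) - 1) :=
  stmt4_general lam mu t hlam hmu hne ht α β hα hβ hβ0 hβ1 p hp
end

section
/- Let c(u) = u/(e^u − 1) (with c(0) = 1) and for fixed b ∈ ℝ define g(u,b) = c(u)·sinh²((u−b)/2). Then g(·,b) attains a global minimum value 0 uniquely at u = b, and its derivative in u is negative for u < b and positive for u > b. -/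
/-- The function `c(u) = u/(e^u - 1)` extended by `c(0) = 1`. -/
noncomputable def c (u : ℝ) : ℝ := if u = 0 then 1 else u / (Real.exp u - 1)

/-- `g(u,b) = c(u) sinh²((u-b)/2)`. -/
noncomputable def g (u b : ℝ) : ℝ := c u * Real.sinh ((u - b) / 2) ^ 2

/-!
With `t = (u - b)/2`, `∂g/∂u = sinh t · (c' u · sinh t + c u · cosh t)`, and the bracket is
positive as soon as `c > 0` and `-c ≤ c' ≤ 0`. The function `c` is the reciprocal of the
difference quotient `(e^u - 1)/u` of `exp` at `0`, hence differentiable by analyticity of `exp`,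
and it satisfies `c (-u) = e^u c u`. Differentiating this identity gives `c' 0 = -1/2` and
`c + c' = -e^{-u} c' (-u)`, so everything reduces to `c' ≤ 0`, i.e. to `(1 - u) e^u ≤ 1`.
-/

open Real

section dslope

variable {𝕜 E : Type*} [NontriviallyNormedField 𝕜] [NormedAddCommGroup E] [NormedSpace 𝕜 E]
  {f : 𝕜 → E} {a : 𝕜}

theorem AnalyticAt.analyticAt_dslope (hf : AnalyticAt 𝕜 f a) : AnalyticAt 𝕜 (dslope f a) a :=
  let ⟨_, hp⟩ := hf
  ⟨_, hp.has_fpower_series_dslope_fslope⟩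

theorem Differentiable.dslope_of_analyticAt (hf : Differentiable 𝕜 f) (ha : AnalyticAt 𝕜 f a) :
    Differentiable 𝕜 (dslope f a) := fun x => by
  rcases eq_or_ne x a with rfl | hx
  · exact ha.analyticAt_dslope.differentiableAt
  · exact (differentiableAt_dslope_of_ne hx).2 (hf x)

end dslope

theorem dslope_exp_zero_pos (u : ℝ) : 0 < dslope exp 0 u := by
  rcases eq_or_ne u 0 with rfl | hu
  · simp
  · rw [dslope_of_ne _ hu]
    exact (exp_strictMono.strictMonoOn _).slope_pos (Set.mem_univ _) (Set.mem_univ _) hu.symm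

theorem c_eq_inv_dslope_exp : c = fun u => (dslope exp 0 u)⁻¹ := by
  ext u
  rcases eq_or_ne u 0 with rfl | hu
  · simp [c]
  · simp [c, hu, dslope_of_ne _ hu, slope_def_field]

theorem c_pos (u : ℝ) : 0 < c u := by
  rw [c_eq_inv_dslope_exp]
  exact inv_pos.2 (dslope_exp_zero_pos u)

theorem differentiable_c : Differentiable ℝ c := by
  rw [c_eq_inv_dslope_exp]
  exact (differentiable_exp.dslope_of_analyticAt analyticAt_rexp).inv
    fun u => (dslope_exp_zero_pos u).ne'

theorem c_neg (u : ℝ) : c (-u) = exp u * c u := by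
  rcases eq_or_ne u 0 with rfl | hu
  · simp
  · have h : exp u - 1 ≠ 0 := by simpa [sub_eq_zero] using hu
    have h' : 1 - exp u ≠ 0 := fun h' => h (by linarith)
    simp only [c, neg_eq_zero, hu, if_false, exp_neg]
    field_simp
    ring

theorem deriv_c_of_ne_zero {u : ℝ} (hu : u ≠ 0) :
    deriv c u = (exp u - 1 - u * exp u) / (exp u - 1) ^ 2 := by
  have h : exp u - 1 ≠ 0 := by simpa [sub_eq_zero] using hu
  have hc : c =ᶠ[nhds u] fun v => v / (exp v - 1) := by
    filter_upwards [eventually_ne_nhds hu] with v hv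
    simp [c, hv]
  rw [hc.deriv_eq]
  exact ((hasDerivAt_id' u).div ((hasDerivAt_exp u).sub_const 1) h).deriv.trans (by ring)

theorem neg_deriv_c_neg (u : ℝ) : -deriv c (-u) = exp u * (c u + deriv c u) := by
  rw [← deriv_comp_neg, funext c_neg]
  exact ((hasDerivAt_exp u).mul (differentiable_c u).hasDerivAt).deriv.trans (by ring)

theorem deriv_c_zero : deriv c 0 = -1 / 2 := by
  have := neg_deriv_c_neg 0
  simp only [neg_zero, exp_zero, one_mul, c, if_true] at this
  linarith

theorem deriv_c_nonpos (u : ℝ) : deriv c u ≤ 0 := by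
  rcases eq_or_ne u 0 with rfl | hu
  · rw [deriv_c_zero]; norm_num
  · rw [deriv_c_of_ne_zero hu]
    refine div_nonpos_of_nonpos_of_nonneg ?_ (sq_nonneg _)
    have h := mul_le_mul_of_nonneg_right (add_one_le_exp (-u)) (exp_pos u).le
    rw [← exp_add, neg_add_cancel, exp_zero] at h
    linarith

theorem c_add_deriv_c_nonneg (u : ℝ) : 0 ≤ c u + deriv c u := by
  have h := neg_deriv_c_neg u
  have := deriv_c_nonpos (-u)
  exact nonneg_of_mul_nonneg_right (by linarith) (exp_pos u)

theorem mul_sinh_add_mul_cosh_pos {a d : ℝ} (ha : 0 < a) (hd : d ≤ 0) (had : 0 ≤ a + d)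
    (t : ℝ) : 0 < d * sinh t + a * cosh t := by
  rcases le_total t 0 with ht | ht
  · nlinarith [sinh_nonpos_iff.2 ht, cosh_pos t]
  · nlinarith [sinh_nonneg_iff.2 ht, sinh_lt_cosh t]

theorem hasDerivAt_g (b u : ℝ) : HasDerivAt (fun v => g v b)
    (sinh ((u - b) / 2) * (deriv c u * sinh ((u - b) / 2) + c u * cosh ((u - b) / 2))) u := by
  have hsinh := (((hasDerivAt_id' u).sub_const b).div_const 2).sinh.pow 2
  refine ((differentiable_c u).hasDerivAt.mul hsinh).congr_deriv ?_
  simp only [Pi.pow_apply]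
  ring

/-- `g(·,b)` attains a global minimum value 0 uniquely at `u = b`,
and its derivative in `u` is negative for `u < b` and positive for `u > b`. -/
theorem stmt9 (b : ℝ) :
    g b b = 0 ∧
    (∀ u, u ≠ b → 0 < g u b) ∧
    (∀ u, u < b → deriv (fun v => g v b) u < 0) ∧
    (∀ u, b < u → 0 < deriv (fun v => g v b) u) := by
  have bracket_pos (u : ℝ) := mul_sinh_add_mul_cosh_pos (c_pos u) (deriv_c_nonpos u)
    (c_add_deriv_c_nonneg u) ((u - b) / 2)
  refine ⟨by simp [g], fun u hu => ?_, fun u hu => ?_, fun u hu => ?_⟩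
  · have : sinh ((u - b) / 2) ≠ 0 := by
      rw [Ne, sinh_eq_zero]
      intro h
      exact hu (by linarith)
    exact mul_pos (c_pos u) (by positivity)
  · rw [(hasDerivAt_g b u).deriv]
    exact mul_neg_of_neg_of_pos (sinh_neg_iff.2 (by linarith)) (bracket_pos u)
  · rw [(hasDerivAt_g b u).deriv]
    exact mul_pos (sinh_pos_iff.2 (by linarith)) (bracket_pos u)
end

section
/- Let λ, μ > 0, λ ≠ μ, ω = λ − μ, t > 0, and m = e^{ωt}. Define A = λ(m−1)(λ − μm), B(k,a) = 2λμ(1 + m² − m − (a/k)m) + m(λ² + μ²)((a/k) − 1), C = μ(m−1)(μ − λm), for positive integers a, k. Then the discriminant satisfies B(k,a)² − 4AC ≥ 0, i.e., the saddlepoint equation As² + Bs + C = 0 has real roots. -/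
/-- the discriminant of the saddlepoint quadratic equation of a
linear birth-and-death process is nonnegative, i.e. the equation has real roots. -/
theorem stmt12 (lam mu t : ℝ) (hlam : 0 < lam) (hmu : 0 < mu) (hne : lam ≠ mu)
    (ht : 0 < t) (a k : ℕ) (ha : 0 < a) (hk : 0 < k)
    (m A B C : ℝ)
    (hm : m = Real.exp ((lam - mu) * t))
    (hA : A = lam * (m - 1) * (lam - mu * m))
    (hB : B = 2 * lam * mu * (1 + m ^ 2 - m - ((a : ℝ) / (k : ℝ)) * m) +
      m * (lam ^ 2 + mu ^ 2) * ((a : ℝ) / (k : ℝ) - 1))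
    (hC : C = mu * (m - 1) * (mu - lam * m)) :
    0 ≤ B ^ 2 - 4 * A * C := by
  have hmpos : 0 < m := hm ▸ Real.exp_pos _
  have hr : 0 ≤ (a : ℝ) / (k : ℝ) := by positivity
  have key : B ^ 2 - 4 * A * C =
      m * (lam - mu) ^ 2 *
        (m * (lam - mu) ^ 2 * ((a : ℝ) / (k : ℝ) - 1) ^ 2 +
          4 * lam * mu * ((a : ℝ) / (k : ℝ)) * (m - 1) ^ 2) := by
    subst hA hB hC; ring
  rw [key]
  positivity
end

section
/- Let λ > μ > 0, Δt > 0, m = e^{(λ−μ)Δt}, and consider the map Φ(m, σ²) = ((log m)/(2Δt)·(σ²/(m(m−1)) + 1), (log m)/(2Δt)·(σ²/(m(m−1)) − 1)). If (M_n, S_n) are random sequences with √n(M_n − m) → 0 in probability and √n(S_n − σ²) → N(0, 2σ⁴) in distribution, then √n(Φ(M_n, S_n) − Φ(m, σ²)) converges in distribution to a bivariate normal with mean zero and covariance matrix ((log m)²σ⁴/(2(Δt)²m²(m−1)²)) · [[1,1],[1,1]]. -/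
/-!
The map `Φ` is differentiable at `(m, σ²)` because `m > 1`, so the delta method applies to the
pair `(Mₙ, Sₙ)`. By Slutsky's theorem `√n((Mₙ, Sₙ) - (m, σ²))` converges in distribution to
`(0, Z)` with `Z ~ N(0, 2σ⁴)`, hence `√n(Φ(Mₙ, Sₙ) - Φ(m, σ²))` converges to `DΦ(m, σ²)(0, Z)`.
Only the partial derivative `∂Φ/∂σ² = c(1, 1)`, `c = log m / (2Δt m(m-1))`, survives, so the
limit is `(cZ, cZ)`, and `cZ ~ N(0, 2c²σ⁴) = N(0, v)`.
-/

open MeasureTheory Filter ProbabilityTheory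

open scoped Topology

namespace MeasureTheory

variable {ι Ω Ω' : Type*} {mΩ : MeasurableSpace Ω} {μ : Measure Ω}
  {mΩ' : MeasurableSpace Ω'} {μ' : Measure Ω'} {l : Filter ι}

section TendstoInMeasure

variable {E F : Type*} [PseudoMetricSpace E] [PseudoMetricSpace F]

lemma tendstoInMeasure_const_of_tendsto {a : ι → E} {c : E} (ha : Tendsto a l (𝓝 c)) :
    TendstoInMeasure μ (fun i (_ : Ω) ↦ a i) l (fun _ ↦ c) := by
  rw [tendstoInMeasure_iff_dist]
  intro ε hε
  refine tendsto_const_nhds.congr' ?_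
  filter_upwards [tendsto_iff_dist_tendsto_zero.mp ha |>.eventually_lt_const hε] with i hi
  simp [hi.not_ge]

lemma TendstoInMeasure.comp_of_continuousAt {X : ι → Ω → E} {c : E}
    (hX : TendstoInMeasure μ X l (fun _ ↦ c)) {g : E → F} (hg : ContinuousAt g c) :
    TendstoInMeasure μ (fun i ω ↦ g (X i ω)) l (fun _ ↦ g c) := by
  rw [tendstoInMeasure_iff_dist] at hX ⊢
  intro ε hε
  obtain ⟨δ, hδ, hgδ⟩ := Metric.continuousAt_iff.mp hg ε hε
  refine tendsto_of_tendsto_of_tendsto_of_le_of_le tendsto_const_nhds (hX δ hδ)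
    (fun _ ↦ zero_le) fun i ↦ measure_mono fun ω hω ↦ ?_
  by_contra h
  exact (not_le.mpr (hgδ (not_le.mp h))) hω

end TendstoInMeasure

variable [IsProbabilityMeasure μ] [IsProbabilityMeasure μ']

lemma tendstoInDistribution_iff_forall_integral_tendsto {E : Type*} [TopologicalSpace E]
    [MeasurableSpace E] [OpensMeasurableSpace E] {X : ι → Ω → E} {Z : Ω' → E}
    (hX : ∀ i, AEMeasurable (X i) μ) (hZ : AEMeasurable Z μ') :
    TendstoInDistribution X l Z (fun _ ↦ μ) μ' ↔
      ∀ f : BoundedContinuousFunction E ℝ,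
        Tendsto (fun i ↦ ∫ ω, f (X i ω) ∂μ) l (𝓝 (∫ ω, f (Z ω) ∂μ')) := by
  have hmap : ∀ f : BoundedContinuousFunction E ℝ, (∀ i, ∫ x, f x ∂(μ.map (X i)) = ∫ ω, f (X i ω) ∂μ)
      ∧ ∫ x, f x ∂(μ'.map Z) = ∫ ω, f (Z ω) ∂μ' := fun f ↦
    ⟨fun i ↦ integral_map (hX i) f.continuous.aestronglyMeasurable,
      integral_map hZ f.continuous.aestronglyMeasurable⟩
  refine ⟨fun h f ↦ ?_, fun h ↦ ⟨hX, hZ, ?_⟩⟩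
  · have := ProbabilityMeasure.tendsto_iff_forall_integral_tendsto.mp h.tendsto f
    simpa only [ProbabilityMeasure.coe_mk, (hmap f).1, (hmap f).2] using this
  · refine ProbabilityMeasure.tendsto_iff_forall_integral_tendsto.mpr fun f ↦ ?_
    simpa only [ProbabilityMeasure.coe_mk, (hmap f).1, (hmap f).2] using h f

section Slutsky

variable {E E' F : Type*} [SeminormedAddCommGroup E] [MeasurableSpace E] [BorelSpace E]
  [SeminormedAddCommGroup E'] [MeasurableSpace E'] [BorelSpace E']
  [SeminormedAddCommGroup F] [MeasurableSpace F] [BorelSpace F]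

lemma TendstoInDistribution.tendstoInMeasure_const {X : ι → Ω → F} {c : F}
    (h : TendstoInDistribution X l (fun _ ↦ c) (fun _ ↦ μ) μ') :
    TendstoInMeasure μ X l (fun _ ↦ c) := by
  rw [tendstoInMeasure_iff_norm]
  intro ε hε
  have hF : IsClosed {x : F | ε ≤ ‖x - c‖} := isClosed_le continuous_const (by fun_prop)
  have hlim := ProbabilityMeasure.limsup_measure_closed_le_of_tendsto h.tendsto hF
  simp only [ProbabilityMeasure.coe_mk, Measure.map_const, measure_univ, one_smul] at hlim
  rw [Measure.dirac_apply' _ hF.measurableSet] at hlim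
  simp only [Measure.map_apply_of_aemeasurable (h.forall_aemeasurable _) hF.measurableSet] at hlim
  refine tendsto_of_le_liminf_of_limsup_le (by simp) (hlim.trans ?_)
  simp [hε]

lemma TendstoInDistribution.tendstoInMeasure_comp_prodMk [SecondCountableTopology E]
    [SecondCountableTopology E'] [l.IsCountablyGenerated]
    {X : ι → Ω → E} {Z : Ω' → E} {Y : ι → Ω → E'} {c : E'} {g : E × E' → F} {d : F}
    (hg : Continuous g) (hgc : ∀ x, g (x, c) = d)
    (hXZ : TendstoInDistribution X l Z (fun _ ↦ μ) μ') (hY : TendstoInMeasure μ Y l (fun _ ↦ c))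
    (hYm : ∀ i, AEMeasurable (Y i) μ) :
    TendstoInMeasure μ (fun i ω ↦ g (X i ω, Y i ω)) l (fun _ ↦ d) := by
  have := hXZ.continuous_comp_prodMk_of_tendstoInMeasure_const hg hY hYm
  simp only [hgc] at this
  exact this.tendstoInMeasure_const

end Slutsky

section DeltaMethod

variable {E G : Type*}
  [NormedAddCommGroup E] [NormedSpace ℝ E] [MeasurableSpace E] [BorelSpace E]
  [SecondCountableTopology E]
  [NormedAddCommGroup G] [NormedSpace ℝ G] [MeasurableSpace G] [BorelSpace G]
  [SecondCountableTopology G] [l.IsCountablyGenerated]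
  {T : ι → Ω → E} {θ : E} {r : ι → ℝ} {Z : Ω' → E}

lemma TendstoInDistribution.tendstoInMeasure_of_smul_sub (hr : Tendsto r l atTop)
    (hT : TendstoInDistribution (fun i ω ↦ r i • (T i ω - θ)) l Z (fun _ ↦ μ) μ') :
    TendstoInMeasure μ T l (fun _ ↦ θ) := by
  have h := hT.tendstoInMeasure_comp_prodMk (g := fun p : E × ℝ ↦ p.2 • p.1) (d := 0)
    (by fun_prop) (by simp) (tendstoInMeasure_const_of_tendsto (tendsto_inv_atTop_zero.comp hr))
    (fun _ ↦ aemeasurable_const)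
  have h' : TendstoInMeasure μ (fun i ω ↦ T i ω - θ) l 0 := by
    refine h.congr' ?_ EventuallyEq.rfl
    filter_upwards [hr.eventually_gt_atTop 0] with i hi
    exact ae_of_all _ fun ω ↦ by simp [smul_smul, inv_mul_cancel₀ hi.ne']
  rw [tendstoInMeasure_iff_norm] at h' ⊢
  simpa using h'

/-- **Delta method**. -/
theorem TendstoInDistribution.smul_sub_comp_of_hasFDerivAt (hr : Tendsto r l atTop)
    (hTm : ∀ i, AEMeasurable (T i) μ)
    (hT : TendstoInDistribution (fun i ω ↦ r i • (T i ω - θ)) l Z (fun _ ↦ μ) μ')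
    {F : E → G} {F' : E →L[ℝ] G} (hF : HasFDerivAt F F' θ) (hFm : Measurable F) :
    TendstoInDistribution (fun i ω ↦ r i • (F (T i ω) - F θ)) l (fun ω ↦ F' (Z ω))
      (fun _ ↦ μ) μ' := by
  -- For `r ≥ 0` the remainder `r • (F x - F θ - F' (x - θ))` equals `‖r • (x - θ)‖ • ρ x`: a
  -- factor converging in distribution times one tending to `0` in probability.
  let ρ : E → G := fun x ↦ ‖x - θ‖⁻¹ • (F x - F θ - F' (x - θ))
  have hρ : ContinuousAt ρ θ := by
    have h := hasFDerivAt_iff_tendsto.mp hF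
    simp only [ContinuousAt, ρ, sub_self, map_zero, smul_zero]
    rw [tendsto_zero_iff_norm_tendsto_zero]
    simpa only [norm_smul, norm_inv, norm_norm] using h
  have hρT : TendstoInMeasure μ (fun i ω ↦ ρ (T i ω)) l (fun _ ↦ 0) := by
    simpa [ρ] using (hT.tendstoInMeasure_of_smul_sub hr).comp_of_continuousAt hρ
  have hrem := hT.tendstoInMeasure_comp_prodMk (g := fun p : E × G ↦ ‖p.1‖ • p.2) (d := 0)
    (by fun_prop) (by simp) hρT (fun i ↦ by fun_prop)
  refine tendstoInDistribution_of_tendstoInMeasure_sub _ _ (hT.continuous_comp F'.continuous)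
    ?_ (fun i ↦ by fun_prop)
  refine hrem.congr' ?_ EventuallyEq.rfl
  filter_upwards [hr.eventually_ge_atTop 0] with i hi
  refine ae_of_all _ fun ω ↦ ?_
  by_cases hθ : T i ω = θ
  · simp [ρ, hθ]
  have hnorm : ‖T i ω - θ‖ ≠ 0 := norm_ne_zero_iff.mpr (sub_ne_zero.mpr hθ)
  have hscale : ‖r i • (T i ω - θ)‖ * ‖T i ω - θ‖⁻¹ = r i := by
    rw [norm_smul, Real.norm_of_nonneg hi, mul_assoc, mul_inv_cancel₀ hnorm, mul_one]
  change ‖r i • (T i ω - θ)‖ • ρ (T i ω) = r i • (F (T i ω) - F θ) - F' (r i • (T i ω - θ))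
  rw [smul_smul, hscale, map_smul, smul_sub (r i) (F (T i ω) - F θ)]

end DeltaMethod

end MeasureTheory

lemma HasFDerivAt.apply_zero_mk_eq_smul {G : Type*} [NormedAddCommGroup G] [NormedSpace ℝ G]
    {F : ℝ × ℝ → G} {F' : ℝ × ℝ →L[ℝ] G} {a b : ℝ} (hF : HasFDerivAt F F' (a, b)) {v : G}
    (hv : HasDerivAt (fun s ↦ F (a, s)) v b) (z : ℝ) : F' (0, z) = z • v := by
  have hline := hF.comp_hasDerivAt b ((hasDerivAt_const b a).prodMk (hasDerivAt_id b))
  rw [← hline.unique hv, ← map_smul]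
  simp

lemma integral_comp_const_mul_gaussianReal {E : Type*} [NormedAddCommGroup E] [NormedSpace ℝ E]
    {g : ℝ → E} (hg : Continuous g) {c : ℝ} {w v : NNReal} (hv : (v : ℝ) = c ^ 2 * w) :
    ∫ x, g (c * x) ∂gaussianReal 0 w = ∫ x, g x ∂gaussianReal 0 v := by
  have h := gaussianReal_map_const_mul (μ := 0) (v := w) c
  rw [mul_zero, show NNReal.mk (c ^ 2) (sq_nonneg c) * w = v from NNReal.eq hv.symm] at h
  rw [← h, integral_map (measurable_const_mul c).aemeasurable hg.aestronglyMeasurable]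

-- With `m = e^{(λ-μ)Δt}` and `σ² = (λ+μ)/(λ-μ) · m(m-1)` (mean and variance of the offspring law
-- of the Galton–Watson chain embedded at spacing `Δt`), this map sends `(m, σ²)` back to `(λ, μ)`.
noncomputable def birthDeathRates (Δt : ℝ) (p : ℝ × ℝ) : ℝ × ℝ :=
  (Real.log p.1 / (2 * Δt) * (p.2 / (p.1 * (p.1 - 1)) + 1),
    Real.log p.1 / (2 * Δt) * (p.2 / (p.1 * (p.1 - 1)) - 1))

lemma measurable_birthDeathRates (Δt : ℝ) : Measurable (birthDeathRates Δt) := by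
  unfold birthDeathRates
  fun_prop

lemma hasFDerivAt_birthDeathRates (Δt : ℝ) {x : ℝ} (hx₀ : x ≠ 0) (hx₁ : x ≠ 1) (s : ℝ) :
    ∃ F' : ℝ × ℝ →L[ℝ] ℝ × ℝ, HasFDerivAt (birthDeathRates Δt) F' (x, s) ∧
      ∀ z, F' (0, z) = (Real.log x / (2 * Δt * (x * (x - 1))) * z,
        Real.log x / (2 * Δt * (x * (x - 1))) * z) := by
  have hx : x * (x - 1) ≠ 0 := mul_ne_zero hx₀ (sub_ne_zero.mpr hx₁)
  have hF : HasFDerivAt (birthDeathRates Δt) (fderiv ℝ (birthDeathRates Δt) (x, s)) (x, s) := by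
    unfold birthDeathRates
    exact DifferentiableAt.hasFDerivAt (by fun_prop (disch := assumption))
  have hline : HasDerivAt (fun s ↦ birthDeathRates Δt (x, s))
      (Real.log x / (2 * Δt) * (1 / (x * (x - 1))),
        Real.log x / (2 * Δt) * (1 / (x * (x - 1)))) s := by
    have h := (hasDerivAt_id' s).div_const (x * (x - 1))
    unfold birthDeathRates
    dsimp only
    exact ((h.add_const 1).const_mul _).prodMk ((h.sub_const 1).const_mul _)
  refine ⟨_, hF, fun z ↦ ?_⟩
  rw [hF.apply_zero_mk_eq_smul hline, Prod.smul_mk, smul_eq_mul, Prod.mk.injEq]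
  constructor <;> field_simp

theorem stmt17_general {Ω : Type*} [MeasurableSpace Ω]
    (P : Measure Ω) [IsProbabilityMeasure P]
    (lam mu Δt : ℝ) (hlt : mu < lam) (hΔt : 0 < Δt)
    (m σ2 : ℝ) (hm : m = Real.exp ((lam - mu) * Δt))
    (Mn Sn : ℕ → Ω → ℝ)
    (hMmeas : ∀ n, Measurable (Mn n)) (hSmeas : ∀ n, Measurable (Sn n))
    (Φ : ℝ → ℝ → ℝ × ℝ)
    (hΦ : ∀ x s, Φ x s =
      (Real.log x / (2 * Δt) * (s / (x * (x - 1)) + 1),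
       Real.log x / (2 * Δt) * (s / (x * (x - 1)) - 1)))
    (hMn : ∀ ε : ℝ, 0 < ε → Tendsto
      (fun n : ℕ => P {ω | ε ≤ |Real.sqrt n * (Mn n ω - m)|}) atTop (nhds 0))
    (hSn : ∀ f : BoundedContinuousFunction ℝ ℝ, Tendsto
      (fun n : ℕ => ∫ ω, f (Real.sqrt n * (Sn n ω - σ2)) ∂P) atTop
      (nhds (∫ x, f x ∂(ProbabilityTheory.gaussianReal 0 (2 * σ2 ^ 2).toNNReal))))
    (v : ℝ)
    (hv : v = Real.log m ^ 2 * σ2 ^ 2 / (2 * Δt ^ 2 * m ^ 2 * (m - 1) ^ 2)) :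
    ∀ f : BoundedContinuousFunction (ℝ × ℝ) ℝ, Tendsto
      (fun n : ℕ => ∫ ω, f (Real.sqrt n * ((Φ (Mn n ω) (Sn n ω)).1 - (Φ m σ2).1),
                        Real.sqrt n * ((Φ (Mn n ω) (Sn n ω)).2 - (Φ m σ2).2)) ∂P)
      atTop
      (nhds (∫ x, f (x, x) ∂(ProbabilityTheory.gaussianReal 0 v.toNNReal))) := by
  have hm1 : 1 < m := hm ▸ Real.one_lt_exp_iff.mpr (mul_pos (sub_pos.mpr hlt) hΔt)
  obtain ⟨F', hF, hF'⟩ := hasFDerivAt_birthDeathRates Δt (by positivity) hm1.ne' σ2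
  have hΦ' : birthDeathRates Δt = fun p ↦ Φ p.1 p.2 := funext fun p ↦ (hΦ p.1 p.2).symm
  rw [hΦ'] at hF
  have hS : TendstoInDistribution (fun (n : ℕ) ω ↦ √(n : ℝ) * (Sn n ω - σ2)) atTop id
      (fun _ ↦ P) (gaussianReal 0 (2 * σ2 ^ 2).toNNReal) :=
    (tendstoInDistribution_iff_forall_integral_tendsto (fun n ↦ by fun_prop)
      aemeasurable_id).mpr hSn
  have hM : TendstoInMeasure P (fun (n : ℕ) ω ↦ √(n : ℝ) * (Mn n ω - m)) atTop (fun _ ↦ 0) := by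
    simpa [tendstoInMeasure_iff_norm] using hMn
  have hT : TendstoInDistribution (fun (n : ℕ) ω ↦ √(n : ℝ) • ((Mn n ω, Sn n ω) - (m, σ2)))
      atTop (fun x ↦ (0, x)) (fun _ ↦ P) (gaussianReal 0 (2 * σ2 ^ 2).toNNReal) :=
    hS.continuous_comp_prodMk_of_tendstoInMeasure_const (g := Prod.swap) continuous_swap hM
      (fun n ↦ by fun_prop)
  have hlim := hT.smul_sub_comp_of_hasFDerivAt
    (Real.tendsto_sqrt_atTop.comp tendsto_natCast_atTop_atTop) (fun n ↦ by fun_prop) hF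
    (hΦ' ▸ measurable_birthDeathRates Δt)
  rw [tendstoInDistribution_iff_forall_integral_tendsto hlim.forall_aemeasurable
    hlim.aemeasurable_limit] at hlim
  have hvar : (v.toNNReal : ℝ) =
      (Real.log m / (2 * Δt * (m * (m - 1)))) ^ 2 * (2 * σ2 ^ 2).toNNReal := by
    rw [Real.coe_toNNReal v (by rw [hv]; positivity), Real.coe_toNNReal _ (by positivity), hv]
    field_simp
  intro f
  have hlimit : ∫ x, f (F' (0, x)) ∂gaussianReal 0 (2 * σ2 ^ 2).toNNReal
      = ∫ x, f (x, x) ∂gaussianReal 0 v.toNNReal := by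
    simp_rw [hF']
    exact integral_comp_const_mul_gaussianReal (g := fun y ↦ f (y, y)) (by fun_prop) hvar
  rw [← hlimit]
  exact hlim f

/-- delta-method step for the asymptotic normality of the
Galton--Watson estimators of the birth and death rates: if `√n(Mₙ - m) → 0` in
probability and `√n(Sₙ - σ²) → N(0, 2σ⁴)` in distribution, then
`√n(Φ(Mₙ,Sₙ) - Φ(m,σ²))` converges in distribution to a degenerate bivariate
normal with covariance matrix `v·[[1,1],[1,1]]`, i.e. to the law of `(X, X)`
with `X ~ N(0, v)`, where `v = (log m)²σ⁴/(2Δt²m²(m-1)²)`. -/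
theorem stmt17 {Ω : Type*} [MeasurableSpace Ω]
    (P : Measure Ω) [IsProbabilityMeasure P]
    (lam mu Δt : ℝ) (hmu : 0 < mu) (hlt : mu < lam) (hΔt : 0 < Δt)
    (m σ2 : ℝ) (hm : m = Real.exp ((lam - mu) * Δt)) (hσ2 : 0 < σ2)
    (Mn Sn : ℕ → Ω → ℝ)
    (hMmeas : ∀ n, Measurable (Mn n)) (hSmeas : ∀ n, Measurable (Sn n))
    (Φ : ℝ → ℝ → ℝ × ℝ)
    (hΦ : ∀ x s, Φ x s =
      (Real.log x / (2 * Δt) * (s / (x * (x - 1)) + 1),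
       Real.log x / (2 * Δt) * (s / (x * (x - 1)) - 1)))
    (hMn : ∀ ε : ℝ, 0 < ε → Tendsto
      (fun n : ℕ => P {ω | ε ≤ |Real.sqrt n * (Mn n ω - m)|}) atTop (nhds 0))
    (hSn : ∀ f : BoundedContinuousFunction ℝ ℝ, Tendsto
      (fun n : ℕ => ∫ ω, f (Real.sqrt n * (Sn n ω - σ2)) ∂P) atTop
      (nhds (∫ x, f x ∂(ProbabilityTheory.gaussianReal 0 (2 * σ2 ^ 2).toNNReal))))
    (v : ℝ)
    (hv : v = Real.log m ^ 2 * σ2 ^ 2 / (2 * Δt ^ 2 * m ^ 2 * (m - 1) ^ 2)) :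
    ∀ f : BoundedContinuousFunction (ℝ × ℝ) ℝ, Tendsto
      (fun n : ℕ => ∫ ω, f (Real.sqrt n * ((Φ (Mn n ω) (Sn n ω)).1 - (Φ m σ2).1),
                        Real.sqrt n * ((Φ (Mn n ω) (Sn n ω)).2 - (Φ m σ2).2)) ∂P)
      atTop
      (nhds (∫ x, f (x, x) ∂(ProbabilityTheory.gaussianReal 0 v.toNNReal))) :=
  stmt17_general P lam mu Δt hlt hΔt m σ2 hm Mn Sn hMmeas hSmeas Φ hΦ hMn hSn v hv
end
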